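/- Gale duality, boundedness form: Let V be a linear subspace of ℝⁿ, let t ∈ ℝⁿ, and let α : Fin n → Bool be a sign vector with associated closed orthant O_α. Then the chamber (t + V) ∩ O_α is nonempty if and only if the linear functional y ↦ ⟨t, y⟩ is bounded below on the cone V^⊥ ∩ O_α (equivalently, the set {⟨t, y⟩ | y ∈ V^⊥ ∩ O_α} is bounded below in ℝ). In other words, a sign vector is t-unstable for the arrangement on t + V exactly when the functional ⟨−t, ·⟩ is unbounded above on the corresponding cone of the Gale dual arrangement on V^⊥. -/

import Mathlib

/-!
The chamber `(t + V) ∩ O_α` is nonempty iff `t` lies in the cone `K = V + O_α`. This cone is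
finitely generated, hence closed: by conic Carathéodory it is a finite union of cones spanned by
linearly independent vectors, each an injective linear image of a closed orthant. A closed cone
equals its double inner dual, and the inner dual of `K` is `Vᗮ ∩ O_α`, because `V` has dual `Vᗮ`
and the orthant is self-dual. So `t ∈ K` iff `⟪t, y⟫ ≥ 0` on `Vᗮ ∩ O_α`, and a linear functional
is nonnegative on a cone iff it is bounded below there.
-/

open scoped RealInnerProductSpace

/-- The closed orthant associated to a sign vector `α : Fin n → Bool`. -/
def orthant {n : ℕ} (α : Fin n → Bool) : Set (EuclideanSpace ℝ (Fin n)) :=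
  {x | ∀ i, (α i = true → 0 ≤ x i) ∧ (α i = false → x i ≤ 0)}

/-- The chamber `(t + V) ∩ O_α` of the coordinate hyperplane arrangement restricted to
the affine subspace `t + V`. -/
def chamber {n : ℕ} (V : Submodule ℝ (EuclideanSpace ℝ (Fin n)))
    (t : EuclideanSpace ℝ (Fin n)) (α : Fin n → Bool) : Set (EuclideanSpace ℝ (Fin n)) :=
  ((fun v => t + v) '' (V : Set (EuclideanSpace ℝ (Fin n)))) ∩ orthant α

open PointedCone ProperCone

namespace PointedCone

section Module

variable {E : Type*} [AddCommGroup E] [Module ℝ E]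

theorem mem_hull_finset_iff {s : Finset E} {x : E} :
    x ∈ hull ℝ (s : Set E) ↔ ∃ f : E → ℝ, (∀ e ∈ s, 0 ≤ f e) ∧ ∑ e ∈ s, f e • e = x := by
  rw [hull, Submodule.mem_span_finset]
  constructor
  · rintro ⟨f, -, rfl⟩
    exact ⟨fun e => f e, fun e _ => (f e).2, rfl⟩
  · rintro ⟨f, hf, rfl⟩
    classical
    refine ⟨fun e => if he : e ∈ s then ⟨f e, hf e he⟩ else 0, fun e he => ?_, ?_⟩
    · by_contra hes
      exact he (dif_neg hes)
    · refine Finset.sum_congr rfl fun e he => ?_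
      simp [he, Nonneg.mk_smul]

theorem mem_hull_erase [DecidableEq E] {s : Finset E} (hs : ¬LinearIndepOn ℝ id (s : Set E))
    {x : E} (hx : x ∈ hull ℝ (s : Set E)) :
    ∃ y ∈ s, x ∈ hull ℝ ((s.erase y : Finset E) : Set E) := by
  obtain ⟨f, hf, rfl⟩ := mem_hull_finset_iff.mp hx
  obtain ⟨g, hg, hpos⟩ : ∃ g : E → ℝ, ∑ e ∈ s, g e • e = 0 ∧ ∃ e ∈ s, 0 < g e := by
    obtain ⟨g, hg, e, he, hge⟩ := not_linearIndepOn_finset_iff.mp hs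
    rcases hge.lt_or_gt with hneg | hpos
    · exact ⟨-g, by simpa using hg, e, he, by simpa using hneg⟩
    · exact ⟨g, hg, e, he, hpos⟩
  obtain ⟨y, hyP, hymin⟩ := (s.filter (0 < g ·)).exists_min_image (fun e => f e / g e)
    (by simpa [Finset.Nonempty] using hpos)
  rw [Finset.mem_filter] at hyP
  set θ := f y / g y
  have hθ : 0 ≤ θ := div_nonneg (hf y hyP.1) hyP.2.le
  refine ⟨y, hyP.1, mem_hull_finset_iff.mpr ⟨fun e => f e - θ * g e, fun e he => ?_, ?_⟩⟩
  · have hes := Finset.mem_of_mem_erase he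
    rcases le_or_gt (g e) 0 with hge | hge
    · linarith [hf e hes, mul_nonpos_of_nonneg_of_nonpos hθ hge]
    · have := hymin e (Finset.mem_filter.mpr ⟨hes, hge⟩)
      rw [le_div_iff₀ hge] at this
      linarith
  · have hy : f y - θ * g y = 0 := by simp [θ, hyP.2.ne']
    rw [Finset.sum_erase s (by simp only [hy, zero_smul])]
    simp only [sub_smul, mul_smul, Finset.sum_sub_distrib, ← Finset.smul_sum, hg, smul_zero,
      sub_zero]

theorem exists_linearIndepOn_of_mem_hull {s : Finset E} {x : E} (hx : x ∈ hull ℝ (s : Set E)) :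
    ∃ t ⊆ s, LinearIndepOn ℝ id (t : Set E) ∧ x ∈ hull ℝ (t : Set E) := by
  classical
  induction s using Finset.strongInduction with
  | H s ih =>
    by_cases hs : LinearIndepOn ℝ id (s : Set E)
    · exact ⟨s, subset_rfl, hs, hx⟩
    · obtain ⟨y, hy, hxy⟩ := mem_hull_erase hs hx
      obtain ⟨t, hts, ht, hxt⟩ := ih _ (Finset.erase_ssubset hy) hxy
      exact ⟨t, hts.trans (Finset.erase_subset y s), ht, hxt⟩

theorem bddBelow_image_iff {C : PointedCone ℝ E} {f : E →ₗ[ℝ] ℝ} :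
    BddBelow (f '' C) ↔ ∀ x ∈ C, 0 ≤ f x := by
  refine ⟨fun ⟨b, hb⟩ x hx => ?_, fun h => ⟨0, Set.forall_mem_image.mpr h⟩⟩
  by_contra! hfx
  set c : ℝ := (|b| + 1) / -f x
  have hc : 0 ≤ c := div_nonneg (by positivity) (neg_nonneg.mpr hfx.le)
  have hbc := hb (Set.mem_image_of_mem f (C.smul_mem hc hx))
  rw [map_smul, smul_eq_mul, div_mul_eq_mul_div, mul_div_assoc, div_neg_self hfx.ne] at hbc
  linarith [neg_abs_le b]

end Module

variable {E : Type*} [AddCommGroup E] [Module ℝ E] [TopologicalSpace E] [IsTopologicalAddGroup E]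
  [ContinuousSMul ℝ E] [T2Space E]

theorem isClosed_hull_of_linearIndepOn {s : Finset E} (hs : LinearIndepOn ℝ id (s : Set E)) :
    IsClosed (hull ℝ (s : Set E) : Set E) := by
  set L := Fintype.linearCombination ℝ ((↑) : s → E)
  have hL : LinearMap.ker L = ⊥ :=
    LinearMap.ker_eq_bot.mpr (linearIndependent_iff_injective_fintypeLinearCombination.mp hs)
  have hhull : (hull ℝ (s : Set E) : Set E) = L '' Set.Ici 0 := by
    ext x
    simp only [SetLike.mem_coe, hull, Submodule.mem_span_finset', Set.mem_image, Set.mem_Ici, L,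
      Fintype.linearCombination_apply]
    constructor
    · rintro ⟨f, rfl⟩
      exact ⟨fun e => f e, fun e => (f e).2, rfl⟩
    · rintro ⟨f, hf, rfl⟩
      exact ⟨fun e => ⟨f e, hf e⟩, rfl⟩
  rw [hhull]
  exact (LinearMap.isClosedEmbedding_of_injective hL).isClosedMap _ isClosed_Ici

theorem isClosed_of_fg [FiniteDimensional ℝ E] {C : PointedCone ℝ E} (hC : C.FG) :
    IsClosed (C : Set E) := by
  classical
  obtain ⟨s, rfl⟩ := hC
  have hC : (hull ℝ (s : Set E) : Set E) =
      ⋃ t ∈ s.powerset.filter (fun t : Finset E => LinearIndepOn ℝ id (t : Set E)),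
        hull ℝ (t : Set E) := by
    ext x
    simp only [SetLike.mem_coe, Set.mem_iUnion, Finset.mem_filter, Finset.mem_powerset,
      exists_prop]
    refine ⟨fun hx => ?_, fun ⟨t, ⟨hts, _⟩, hxt⟩ => Submodule.span_mono hts hxt⟩
    obtain ⟨t, hts, ht, hxt⟩ := exists_linearIndepOn_of_mem_hull hx
    exact ⟨t, ⟨hts, ht⟩, hxt⟩
  rw [hC]
  exact isClosed_biUnion_finset fun t ht =>
    isClosed_hull_of_linearIndepOn (Finset.mem_filter.mp ht).2

end PointedCone

namespace ProperCone

variable {E : Type*} [NormedAddCommGroup E] [InnerProductSpace ℝ E] [CompleteSpace E]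

theorem mem_innerDual_submodule_iff {V : Submodule ℝ E} {y : E} :
    y ∈ innerDual (V : Set E) ↔ y ∈ Vᗮ := by
  rw [mem_innerDual, Submodule.mem_orthogonal]
  refine ⟨fun h u hu => le_antisymm ?_ (h hu), fun h u hu => (h u hu).ge⟩
  simpa [inner_neg_left] using h (V.neg_mem hu)

theorem innerDual_hull (s : Set E) : innerDual (hull ℝ s : Set E) = innerDual s :=
  toPointedCone_injective (PointedCone.dual_hull s)

theorem innerDual_sup (C D : PointedCone ℝ E) :
    innerDual (C ⊔ D : PointedCone ℝ E) = innerDual (C : Set E) ⊓ innerDual (D : Set E) := by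
  rw [← innerDual_union]
  exact ProperCone.toPointedCone_injective (PointedCone.dual_sup C D)

end ProperCone

section Orthant

variable {n : ℕ}

def orthantCone (α : Fin n → Bool) : PointedCone ℝ (EuclideanSpace ℝ (Fin n)) :=
  hull ℝ (Set.range fun i => EuclideanSpace.single i (if α i then 1 else -1))

theorem mem_orthant_iff {α : Fin n → Bool} {x : EuclideanSpace ℝ (Fin n)} :
    x ∈ orthant α ↔ ∀ i, 0 ≤ (if α i then 1 else -1) * x i := by
  refine forall_congr' fun i => ?_
  cases α i <;> simp

theorem coe_orthantCone (α : Fin n → Bool) : (orthantCone α : Set _) = orthant α := by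
  have hcoord (c : Fin n → {c : ℝ // 0 ≤ c}) (j : Fin n) :
      (∑ i, c i • EuclideanSpace.single i (if α i then (1 : ℝ) else -1)) j =
        c j * (if α j then 1 else -1) := by
    change (∑ i, (c i : ℝ) • EuclideanSpace.single i (if α i then (1 : ℝ) else -1)) j = _
    simp [Pi.single_apply, -Nonneg.coe_smul]
  ext x
  simp only [orthantCone, SetLike.mem_coe, hull, Submodule.mem_span_range_iff_exists_fun,
    mem_orthant_iff]
  constructor
  · rintro ⟨c, rfl⟩ i
    rw [hcoord]
    cases α i <;> simp [(c i).2]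
  · intro hx
    refine ⟨fun i => ⟨_, hx i⟩, ?_⟩
    ext j
    rw [hcoord, Subtype.coe_mk]
    split_ifs <;> ring

theorem mem_innerDual_orthantCone_iff {α : Fin n → Bool} {y : EuclideanSpace ℝ (Fin n)} :
    y ∈ innerDual (orthantCone α : Set _) ↔ y ∈ orthant α := by
  rw [orthantCone, innerDual_hull]
  simp [EuclideanSpace.inner_single_left, mem_orthant_iff]

variable (V : Submodule ℝ (EuclideanSpace ℝ (Fin n))) (α : Fin n → Bool)

def feasibilityCone : PointedCone ℝ (EuclideanSpace ℝ (Fin n)) :=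
  (V : PointedCone ℝ _) ⊔ orthantCone α

theorem chamber_nonempty_iff (t : EuclideanSpace ℝ (Fin n)) :
    (chamber V t α).Nonempty ↔ t ∈ feasibilityCone V α := by
  rw [feasibilityCone, Submodule.mem_sup]
  constructor
  · rintro ⟨_, ⟨v, hv, rfl⟩, hx⟩
    exact ⟨-v, V.neg_mem hv, t + v, by rwa [← SetLike.mem_coe, coe_orthantCone],
      neg_add_cancel_comm_assoc v t⟩
  · rintro ⟨v, hv, x, hx, rfl⟩
    exact ⟨x, ⟨-v, V.neg_mem hv, add_neg_cancel_comm v x⟩,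
      by rwa [← SetLike.mem_coe, coe_orthantCone] at hx⟩

theorem isClosed_feasibilityCone :
    IsClosed (feasibilityCone V α : Set (EuclideanSpace ℝ (Fin n))) :=
  isClosed_of_fg ((IsNoetherian.noetherian V).restrictScalars.sup
    (Submodule.fg_span (Set.finite_range _)))

theorem coe_innerDual_feasibilityCone :
    (innerDual (feasibilityCone V α : Set (EuclideanSpace ℝ (Fin n))) : Set _) =
      (Vᗮ : Set (EuclideanSpace ℝ (Fin n))) ∩ orthant α := by
  ext y
  rw [feasibilityCone, innerDual_sup]
  exact and_congr mem_innerDual_submodule_iff mem_innerDual_orthantCone_iff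

end Orthant

/-- Gale duality, boundedness form: the chamber `(t + V) ∩ O_α` is nonempty iff
the linear functional `y ↦ ⟨t, y⟩` is bounded below on the cone `V^⊥ ∩ O_α`. -/
theorem gale_duality_boundedness {n : ℕ} (V : Submodule ℝ (EuclideanSpace ℝ (Fin n)))
    (t : EuclideanSpace ℝ (Fin n)) (α : Fin n → Bool) :
    (chamber V t α).Nonempty ↔
      BddBelow ((fun y => ⟪t, y⟫) ''
        ((Vᗮ : Set (EuclideanSpace ℝ (Fin n))) ∩ orthant α)) := by
  let K : ProperCone ℝ (EuclideanSpace ℝ (Fin n)) := ⟨_, isClosed_feasibilityCone V α⟩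
  let Kdual := (innerDual (K : Set (EuclideanSpace ℝ (Fin n)))).toPointedCone
  rw [chamber_nonempty_iff, ← coe_innerDual_feasibilityCone]
  change t ∈ K ↔ BddBelow (innerₗ _ t '' (Kdual : Set (EuclideanSpace ℝ (Fin n))))
  rw [bddBelow_image_iff, ← innerDual_innerDual K, mem_innerDual]
  exact forall₂_congr fun y _ => by rw [innerₗ_apply_apply, real_inner_comm]
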